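/- Let p be an odd prime and c an element of F_p with c^2 - 4 a nonzero square in F_p. Then the trinomial coefficient T(p-1,1), computed in F_p, equals 0. -/

import Mathlib

/-!
Write `x + c + x⁻¹ = x⁻¹ (x - a)(x - b)` with `ab = 1` and `a - b = s`, where `s² = c² - 4`, so
`T(p-1,1)` is the coefficient of `x^p` in `Q_a Q_b` with `Q_r = (x - r)^(p-1)`. In characteristic
`p` we have `(x - r) Q_r = x^p - r^p`, so
`(a - b) Q_a Q_b = Q_a (x^p - b^p) - Q_b (x^p - a^p)`, whose `x^p`-coefficient is
`(-a)^(p-1) - (-b)^(p-1)` because `deg Q_r < p`. For `a, b ∈ 𝔽_p^×` this vanishes by Fermat,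
and `a ≠ b` lets us cancel.
-/

open Polynomial

/-- The trinomial coefficient: coefficient of `x^k` in `(x + c + x⁻¹)^n` over `R`. -/
noncomputable def triCoeff (R : Type*) [CommRing R] (c : R) (n : ℕ) (k : ℤ) : R :=
  (AddMonoidAlgebra.coeff ((LaurentPolynomial.T 1 + LaurentPolynomial.C c + LaurentPolynomial.T (-1)) ^ n :
      LaurentPolynomial R) : ℤ →₀ R) k

namespace LaurentPolynomial

variable {R : Type*} [Semiring R]

lemma coeff_T_mul_add (m n : ℤ) (f : R[T;T⁻¹]) : (T m * f).coeff (m + n) = f.coeff n := by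
  rw [T, AddMonoidAlgebra.coeff_single_mul_apply, neg_add_cancel_left, one_mul]

lemma coeff_toLaurent_natCast (f : R[X]) (n : ℕ) : f.toLaurent.coeff n = f.coeff n :=
  Finsupp.mapDomain_apply Nat.castEmbedding.injective _ n

lemma T_one_add_C_add_T_neg_one (c : R) :
    (T 1 + C c + T (-1) : R[T;T⁻¹]) = T (-1) * toLaurent (X ^ 2 + Polynomial.C c * X + 1) := by
  simp only [map_add, map_mul, map_pow, map_one, toLaurent_X, toLaurent_C, T_pow, mul_add,
    ← mul_assoc, ← T_add, mul_one]
  rw [T_mul]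
  norm_num [T_zero, add_comm]

end LaurentPolynomial

open LaurentPolynomial in
lemma triCoeff_natCast_sub_natCast {R : Type*} [CommRing R] (c : R) (n m : ℕ) :
    triCoeff R c n (m - n) = ((X ^ 2 + Polynomial.C c * X + 1) ^ n).coeff m := by
  rw [triCoeff, T_one_add_C_add_T_neg_one, mul_pow, T_pow, ← map_pow,
    show (m : ℤ) - n = n * (-1) + m by ring, coeff_T_mul_add, coeff_toLaurent_natCast]

namespace Polynomial

variable {R : Type*} [CommRing R]

lemma X_sq_add_C_mul_X_add_one_eq {a b c : R} (hab : a * b = 1) (hc : a + b = -c) :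
    (X ^ 2 + C c * X + 1 : R[X]) = (X - C a) * (X - C b) := by
  have hsum : C a + C b = -C c := by rw [← map_add, hc, map_neg]
  have hprod : C a * C b = (1 : R[X]) := by rw [← map_mul, hab, map_one]
  linear_combination X * hsum - hprod

lemma coeff_zero_X_sub_C_pow (a : R) (n : ℕ) : ((X - C a) ^ n).coeff 0 = (-a) ^ n := by
  simp [coeff_zero_eq_eval_zero]

lemma coeff_X_sub_C_pow_of_lt (a : R) {n m : ℕ} (h : n < m) : ((X - C a) ^ n).coeff m = 0 :=
  coeff_eq_zero_of_natDegree_lt ((natDegree_pow_le_of_le n (natDegree_X_sub_C_le a)).trans_lt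
    (by omega))

lemma sub_mul_coeff_X_sub_C_pow_mul_X_sub_C_pow (p : ℕ) [ExpChar R p] (a b : R) :
    (a - b) * ((X - C a) ^ (p - 1) * (X - C b) ^ (p - 1)).coeff p =
      (-a) ^ (p - 1) - (-b) ^ (p - 1) := by
  have hp : p - 1 + 1 = p := Nat.sub_add_cancel (expChar_pos R p)
  have hpow (r : R) : (X - C r) * (X - C r) ^ (p - 1) = X ^ p - C (r ^ p) := by
    rw [← pow_succ', hp, sub_pow_expChar, C_pow]
  have hcoeff (r s : R) :
      ((X - C r) ^ (p - 1) * (X ^ p - C (s ^ p))).coeff p = (-r) ^ (p - 1) := by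
    rw [mul_sub, coeff_sub, coeff_mul_C, coeff_X_sub_C_pow_of_lt r (by omega), zero_mul,
      sub_zero, coeff_mul_X_pow', if_pos le_rfl, Nat.sub_self, coeff_zero_X_sub_C_pow]
  calc (a - b) * ((X - C a) ^ (p - 1) * (X - C b) ^ (p - 1)).coeff p
      = ((X - C a) ^ (p - 1) * ((X - C b) * (X - C b) ^ (p - 1)) -
          (X - C b) ^ (p - 1) * ((X - C a) * (X - C a) ^ (p - 1))).coeff p := by
        rw [← coeff_C_mul, C_sub]
        ring_nf
    _ = (-a) ^ (p - 1) - (-b) ^ (p - 1) := by rw [hpow, hpow, coeff_sub, hcoeff, hcoeff]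

end Polynomial

lemma ZMod.coeff_X_sub_C_pow_mul_X_sub_C_pow_eq_zero {p : ℕ} [Fact p.Prime] {a b : ZMod p}
    (ha : a ≠ 0) (hb : b ≠ 0) (hab : a ≠ b) :
    ((X - C a) ^ (p - 1) * (X - C b) ^ (p - 1)).coeff p = 0 := by
  have h := sub_mul_coeff_X_sub_C_pow_mul_X_sub_C_pow p a b
  rwa [ZMod.pow_card_sub_one_eq_one (neg_ne_zero.2 ha),
    ZMod.pow_card_sub_one_eq_one (neg_ne_zero.2 hb), sub_self, mul_eq_zero,
    or_iff_right (sub_ne_zero.2 hab)] at h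

theorem tri_p_sub_one_one_sq (p : ℕ) [Fact p.Prime] (hp : p ≠ 2) (c : ZMod p)
    (hsq : IsSquare (c ^ 2 - 4)) (hne : c ^ 2 - 4 ≠ 0) :
    triCoeff (ZMod p) c (p - 1) 1 = 0 := by
  obtain ⟨s, hs⟩ := hsq
  have h2 : (2 : ZMod p) ≠ 0 := Ring.two_ne_zero (by rwa [ZMod.ringChar_zmod_n])
  have hab : (s - c) / 2 * ((-s - c) / 2) = 1 := by
    rw [div_mul_div_comm, div_eq_one_iff_eq (mul_ne_zero h2 h2)]
    linear_combination hs
  have hsum : (s - c) / 2 + (-s - c) / 2 = -c := by field_simp; ring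
  have hsub : (s - c) / 2 - (-s - c) / 2 = s := by field_simp; ring
  have hroots_ne : (s - c) / 2 ≠ (-s - c) / 2 := by
    rw [← sub_ne_zero, hsub]
    rintro rfl
    exact hne (by rw [hs, mul_zero])
  have hp1 : 1 ≤ p := (Fact.out : p.Prime).one_lt.le
  rw [show (1 : ℤ) = (p : ℕ) - (p - 1 : ℕ) by omega, triCoeff_natCast_sub_natCast,
    X_sq_add_C_mul_X_add_one_eq hab hsum, mul_pow]
  exact ZMod.coeff_X_sub_C_pow_mul_X_sub_C_pow_eq_zero (left_ne_zero_of_mul_eq_one hab)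
    (right_ne_zero_of_mul_eq_one hab) hroots_ne
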